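/- For complex z and w with Re(z - w) > 0, the series Σ_{n=0}^{∞} (w)_n / ((z)_{n+1}) converges to 1/(z-w), where (w)_n and (z)_{n+1} are Pochhammer symbols (Waring's formula). -/

import Mathlib

/-!
Since `(w)_{n+1} / (z)_{n+1} = (w)_n / (z)_n · (w + n)/(z + n)`, the terms telescope:
`(z - w) (w)_n / (z)_{n+1} = (w)_n / (z)_n - (w)_{n+1} / (z)_{n+1}`, so the `N`-th partial sum is
`(1 - (w)_N / (z)_N) / (z - w)`. By Euler's limit formula `Γ(s) = lim n^s n! / (s)_{n+1}`,
the ratio `(w)_{n+1} / (z)_{n+1}` behaves like `n^{w-z} Γ(z) / Γ(w)`, which tends to `0` as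
`Re(z - w) > 0`; when `w` is a nonpositive integer the ratio vanishes eventually instead.
-/

open Filter

noncomputable def poch (z : ℂ) (m : ℕ) : ℂ := ∏ i ∈ Finset.range m, (z + i)

open Topology Finset
open scoped Nat

lemma poch_succ (z : ℂ) (n : ℕ) : poch z (n + 1) = poch z n * (z + n) :=
  prod_range_succ _ _

lemma poch_ne_zero {z : ℂ} (hz : ∀ m : ℕ, z + m ≠ 0) (n : ℕ) : poch z n ≠ 0 :=
  prod_ne_zero_iff.mpr fun i _ => hz i

lemma poch_eq_zero_of_lt {w : ℂ} {k n : ℕ} (hk : w + k = 0) (hkn : k < n) : poch w n = 0 :=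
  prod_eq_zero (mem_range.mpr hkn) hk

lemma Complex.GammaSeq_eq_div_poch (s : ℂ) (n : ℕ) :
    Complex.GammaSeq s n = (n : ℂ) ^ s * n ! / poch s (n + 1) :=
  rfl

lemma sub_mul_poch_div_poch_succ (z w : ℂ) {n : ℕ} (hz : poch z (n + 1) ≠ 0) :
    (z - w) * (poch w n / poch z (n + 1)) =
      poch w n / poch z n - poch w (n + 1) / poch z (n + 1) := by
  simp only [poch_succ] at hz ⊢
  obtain ⟨hzn, hz'⟩ := mul_ne_zero_iff.mp hz
  field_simp
  ring

lemma sum_range_poch_div_poch_succ {z w : ℂ} (hzw : z ≠ w) (hz : ∀ m : ℕ, z + m ≠ 0)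
    (N : ℕ) :
    ∑ n ∈ range N, poch w n / poch z (n + 1) = (1 - poch w N / poch z N) / (z - w) := by
  rw [eq_div_iff (sub_ne_zero.mpr hzw), mul_comm, mul_sum]
  simp_rw [sub_mul_poch_div_poch_succ z w (poch_ne_zero hz _)]
  rw [sum_range_sub']
  simp [poch]

lemma tendsto_natCast_cpow_atTop_zero {u : ℂ} (hu : u.re < 0) :
    Tendsto (fun n : ℕ => (n : ℂ) ^ u) atTop (𝓝 0) := by
  rw [tendsto_zero_iff_norm_tendsto_zero]
  simp_rw [Complex.norm_natCast_cpow_of_re_ne_zero _ hu.ne]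
  simpa [Function.comp_def] using
    (tendsto_rpow_neg_atTop (neg_pos.mpr hu)).comp tendsto_natCast_atTop_atTop

lemma poch_div_poch_succ_eq_cpow_mul_GammaSeq_div {z w : ℂ} {n : ℕ} (hn : n ≠ 0)
    (hz : poch z (n + 1) ≠ 0) (hw : poch w (n + 1) ≠ 0) :
    poch w (n + 1) / poch z (n + 1) =
      (n : ℂ) ^ (w - z) * (Complex.GammaSeq z n / Complex.GammaSeq w n) := by
  have hn' : (n : ℂ) ≠ 0 := Nat.cast_ne_zero.mpr hn
  have hpow (s : ℂ) : (n : ℂ) ^ s ≠ 0 := Complex.cpow_ne_zero_iff.mpr (Or.inl hn')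
  have hfact : (n ! : ℂ) ≠ 0 := mod_cast n.factorial_ne_zero
  rw [Complex.GammaSeq_eq_div_poch, Complex.GammaSeq_eq_div_poch, Complex.cpow_sub _ _ hn']
  field_simp [hpow z, hpow w]

lemma tendsto_poch_div_poch {z w : ℂ} (h : 0 < (z - w).re) (hz : ∀ m : ℕ, z + m ≠ 0) :
    Tendsto (fun N => poch w N / poch z N) atTop (𝓝 0) := by
  by_cases hw : ∃ k : ℕ, w + k = 0
  · obtain ⟨k, hk⟩ := hw
    refine tendsto_const_nhds.congr' ?_
    filter_upwards [eventually_gt_atTop k] with N hN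
    rw [poch_eq_zero_of_lt hk hN, zero_div]
  push Not at hw
  have hGamma : Complex.Gamma w ≠ 0 :=
    Complex.Gamma_ne_zero fun m hm => hw m (by rw [hm]; ring)
  have hlim := (tendsto_natCast_cpow_atTop_zero (u := w - z) (by simpa using h)).mul
    ((Complex.GammaSeq_tendsto_Gamma z).div (Complex.GammaSeq_tendsto_Gamma w) hGamma)
  rw [zero_mul] at hlim
  rw [← tendsto_add_atTop_iff_nat 1]
  refine hlim.congr' ?_
  filter_upwards [eventually_ne_atTop 0] with n hn
  exact (poch_div_poch_succ_eq_cpow_mul_GammaSeq_div hn (poch_ne_zero hz _)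
    (poch_ne_zero hw _)).symm

theorem stmt14 (z w : ℂ) (h : 0 < (z - w).re) (hz : ∀ m : ℕ, z + m ≠ 0) :
    Tendsto (fun N => ∑ n ∈ Finset.range N, poch w n / poch z (n + 1))
      atTop (nhds (1 / (z - w))) := by
  have hzw : z ≠ w := fun e => by simp [e] at h
  have hlim := ((tendsto_poch_div_poch h hz).const_sub 1).div_const (z - w)
  rw [sub_zero] at hlim
  exact hlim.congr fun N => (sum_range_poch_div_poch_succ hzw hz N).symm
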